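/- arXiv:1612.00982 — 2 statements merged into one kernel-verified Lean document; each statement's English description precedes it below -/
import Mathlib

section
/- For all natural numbers k satisfying 0 < k < n, the bracket number satisfies [n choose k] = sum over all sequences 0 < i_1 < i_2 < ... < i_k ≤ n of the product prod_{j=1}^{k} C(i_j, j). -/
/-!
Write `S(n, k)` for the sum of `∏ⱼ C(iⱼ, j)` over all `0 ≤ i₁ < ⋯ < i_k ≤ n`; allowing `i₁ = 0`
changes nothing since `C(0, 1) = 0`. Splitting the tuples according to whether `i_k = n` gives
`S(n, k) = S(n-1, k) + C(n, k) S(n-1, k-1)`, the recursion of the bracket numbers. For `k > n`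
every term vanishes, because `i_{n+1} ≤ n` forces `C(i_{n+1}, n+1) = 0`; this gives
`S(n, n) = S(n-1, n) + S(n-1, n-1) = 1`.
-/

/-- The bracket numbers, defined by the recursion
`[n, k] = [n-1, k] + C(n,k) * [n-1, k-1]` with `[n, 0] = 1` and `[n, n] = 1`. -/
def brack : ℕ → ℕ → ℕ
  | _, 0 => 1
  | 0, _ + 1 => 0
  | n + 1, k + 1 =>
    if n + 1 = k + 1 then 1
    else brack n (k + 1) + Nat.choose (n + 1) (k + 1) * brack n k

open Finset

lemma Fin.strictMono_snoc_iff {α : Type*} [Preorder α] {n : ℕ} {f : Fin n → α} {a : α} :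
    StrictMono (Fin.snoc f a : Fin (n + 1) → α) ↔ StrictMono f ∧ ∀ i, f i < a := by
  rw [← Fin.insertNth_last', Fin.strictMono_insertNth_iff]
  simp [Fin.castSucc_lt_last, Fin.last_le_iff]

open scoped Classical in
def increasingTuples (n k : ℕ) : Finset (Fin k → ℕ) :=
  (Fintype.piFinset fun _ => range (n + 1)).filter StrictMono

lemma mem_increasingTuples {n k : ℕ} {f : Fin k → ℕ} :
    f ∈ increasingTuples n k ↔ StrictMono f ∧ ∀ j, f j ≤ n := by
  simp [increasingTuples, and_comm]

lemma snoc_mem_increasingTuples_iff {n k : ℕ} {f : Fin k → ℕ} :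
    (Fin.snoc f (n + 1) : Fin (k + 1) → ℕ) ∈ increasingTuples (n + 1) (k + 1) ↔
      f ∈ increasingTuples n k := by
  simp only [mem_increasingTuples, Fin.strictMono_snoc_iff, Fin.forall_fin_succ',
    Fin.snoc_castSucc, Fin.snoc_last, le_refl, and_true, Nat.lt_succ_iff]
  exact and_iff_left_of_imp fun h i => (h.2 i).trans n.le_succ

lemma increasingTuples_filter_last_ne (n k : ℕ) :
    (increasingTuples (n + 1) (k + 1)).filter (fun f => f (Fin.last k) ≠ n + 1) =
      increasingTuples n (k + 1) := by
  ext f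
  simp only [mem_filter, mem_increasingTuples]
  constructor
  · rintro ⟨⟨hf, hle⟩, hlast⟩
    refine ⟨hf, fun j => ?_⟩
    have := hf.monotone (Fin.le_last j)
    have := hle (Fin.last k)
    omega
  · rintro ⟨hf, hle⟩
    exact ⟨⟨hf, fun j => (hle j).trans n.le_succ⟩, by have := hle (Fin.last k); omega⟩

def sumProdChoose (n k : ℕ) : ℕ :=
  ∑ f ∈ increasingTuples n k, ∏ j, (f j).choose (j + 1)

lemma sumProdChoose_zero_right (n : ℕ) : sumProdChoose n 0 = 1 := by
  simp [sumProdChoose, increasingTuples, Subsingleton.strictMono]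

lemma sumProdChoose_eq_zero_of_lt {n k : ℕ} (h : n < k) : sumProdChoose n k = 0 := by
  refine sum_eq_zero fun f hf => prod_eq_zero (mem_univ ⟨n, h⟩) (Nat.choose_eq_zero_of_lt ?_)
  exact Nat.lt_succ_of_le ((mem_increasingTuples.mp hf).2 ⟨n, h⟩)

lemma sum_filter_last_eq_choose_mul_sumProdChoose (n k : ℕ) :
    ∑ f ∈ (increasingTuples (n + 1) (k + 1)).filter (fun f => f (Fin.last k) = n + 1),
      ∏ j, (f j).choose (j + 1) = (n + 1).choose (k + 1) * sumProdChoose n k := by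
  rw [sumProdChoose, mul_sum]
  have snoc_init :
      ∀ f ∈ (increasingTuples (n + 1) (k + 1)).filter (fun f => f (Fin.last k) = n + 1),
        Fin.snoc (Fin.init f) (n + 1) = f := fun f hf => by
    rw [← (mem_filter.mp hf).2, Fin.snoc_init_self]
  refine sum_nbij' Fin.init (Fin.snoc · (n + 1)) (fun f hf => ?_) (fun g hg => ?_) snoc_init
    (fun g _ => Fin.init_snoc (α := fun _ => ℕ) _ _) (fun f hf => ?_)
  · rw [← snoc_mem_increasingTuples_iff, snoc_init f hf]
    exact (mem_filter.mp hf).1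
  · exact mem_filter.mpr ⟨snoc_mem_increasingTuples_iff.mpr hg, Fin.snoc_last ..⟩
  · rw [Fin.prod_univ_castSucc, (mem_filter.mp hf).2, mul_comm]
    rfl

lemma sumProdChoose_succ_succ (n k : ℕ) :
    sumProdChoose (n + 1) (k + 1) =
      sumProdChoose n (k + 1) + (n + 1).choose (k + 1) * sumProdChoose n k := by
  rw [sumProdChoose,
    ← sum_filter_not_add_sum_filter _ (fun f : Fin (k + 1) → ℕ => f (Fin.last k) = n + 1),
    increasingTuples_filter_last_ne, sum_filter_last_eq_choose_mul_sumProdChoose]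
  rfl

lemma brack_self (n : ℕ) : brack n n = 1 := by
  cases n <;> simp [brack]

theorem brack_eq_sumProdChoose : ∀ n k, brack n k = sumProdChoose n k
  | _, 0 => by rw [brack, sumProdChoose_zero_right]
  | 0, _ + 1 => by rw [brack, sumProdChoose_eq_zero_of_lt (Nat.succ_pos _)]
  | n + 1, k + 1 => by
    rw [sumProdChoose_succ_succ, brack]
    split_ifs with h
    · obtain rfl : n = k := by omega
      rw [sumProdChoose_eq_zero_of_lt n.lt_succ_self, ← brack_eq_sumProdChoose, brack_self,
        Nat.choose_self]
    · rw [brack_eq_sumProdChoose n, brack_eq_sumProdChoose n]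

open scoped Classical in
lemma sumProdChoose_eq_sum_fin (n k : ℕ) :
    sumProdChoose n k = ∑ f ∈ univ.filter (fun f : Fin k → Fin (n + 1) => StrictMono f),
      ∏ j, (f j : ℕ).choose (j + 1) := by
  symm
  refine sum_nbij (fun f j => f j) (fun f hf => ?_) (fun f _ g _ h => ?_) (fun g hg => ?_)
    (fun _ _ => rfl)
  · exact mem_increasingTuples.mpr
      ⟨Fin.val_strictMono.comp (mem_filter.mp hf).2, fun j => Nat.lt_succ_iff.mp (f j).isLt⟩
  · exact funext fun j => Fin.ext (congrFun h j)
  · obtain ⟨hg, hle⟩ := mem_increasingTuples.mp hg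
    exact ⟨fun j => ⟨g j, Nat.lt_succ_of_le (hle j)⟩,
      mem_filter.mpr ⟨mem_univ _, fun a b hab => Fin.mk_lt_mk.mpr (hg hab)⟩, rfl⟩

theorem brack_eq_sum_prod_choose_general (n k : ℕ) (h0 : 0 < k) :
    brack n k =
      ∑ f ∈ Finset.univ.filter
        (fun f : Fin k → Fin (n + 1) =>
          (∀ a b : Fin k, a < b → f a < f b) ∧ 0 < (f ⟨0, h0⟩ : ℕ)),
        ∏ j : Fin k, Nat.choose (f j : ℕ) ((j : ℕ) + 1) := by
  classical
  have hfilter : univ.filter (fun f : Fin k → Fin (n + 1) =>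
      (∀ a b : Fin k, a < b → f a < f b) ∧ 0 < (f ⟨0, h0⟩ : ℕ)) =
      (univ.filter StrictMono).filter (fun f : Fin k → Fin (n + 1) => 0 < (f ⟨0, h0⟩ : ℕ)) := by
    ext f
    simp [StrictMono]
  rw [brack_eq_sumProdChoose, sumProdChoose_eq_sum_fin, hfilter]
  refine (sum_filter_of_ne fun f _ hf => ?_).symm
  exact Nat.pos_of_ne_zero fun h => hf (prod_eq_zero (mem_univ ⟨0, h0⟩) (by simp [h]))

/-- For `0 < k < n`,
`[n, k] = ∑_{0 < i₁ < i₂ < ⋯ < i_k ≤ n} ∏_{j=1}^{k} C(i_j, j)`. -/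
theorem brack_eq_sum_prod_choose (n k : ℕ) (h0 : 0 < k) (hkn : k < n) :
    brack n k =
      ∑ f ∈ Finset.univ.filter
        (fun f : Fin k → Fin (n + 1) =>
          (∀ a b : Fin k, a < b → f a < f b) ∧ 0 < (f ⟨0, h0⟩ : ℕ)),
        ∏ j : Fin k, Nat.choose (f j : ℕ) ((j : ℕ) + 1) :=
  brack_eq_sum_prod_choose_general n k h0
end

section
/- For all natural numbers p, q ≥ 1, the triangular Ramsey number R_1(p,q,1) equals p+q-1. In particular, for every n ≥ 1, R_1(n,n,1) = 2n-1. -/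
/-- The `n`-th triangular number. -/
def T (n : ℕ) : ℕ := n * (n + 1) / 2

/-- The positions of a triangular board with `m` levels, labeled `1, …, T m`
row by row; row `r` consists of the labels in `(T (r-1), T r]`. -/
def board (m : ℕ) : Finset ℕ := Finset.Icc 1 (T m)

/-- `S` is a triangular subset with `n` levels (a `△_n`) of the board with `m` levels:
there are rows `1 ≤ rows 0 < rows 1 < ⋯ ≤ m` and, for each `j`, a set of `j + 1`
positions lying in row `rows j`, whose union is `S`. -/
def IsTriangleOn (m n : ℕ) (S : Finset ℕ) : Prop :=
  ∃ rows : Fin n → ℕ, StrictMono rows ∧ (∀ j, 1 ≤ rows j) ∧ (∀ j, rows j ≤ m) ∧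
    ∃ L : Fin n → Finset ℕ,
      (∀ j, (L j).card = (j : ℕ) + 1) ∧
      (∀ j, L j ⊆ Finset.Ioc (T (rows j - 1)) (T (rows j))) ∧
      S = Finset.univ.biUnion L

/-- The triangular Ramsey number `R₁(p, q, 1)`: the least `m ≥ max p q` such that
every partition of the positions of the board with `m` levels into two color
classes `X` and its complement contains a `△_p` entirely in `X` or a `△_q`
entirely in the complement of `X`. -/
noncomputable def R1 (p q : ℕ) : ℕ :=
  sInf {m | max p q ≤ m ∧ ∀ X : Finset ℕ, X ⊆ board m →
    (∃ S, IsTriangleOn m p S ∧ S ⊆ X) ∨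
    (∃ S, IsTriangleOn m q S ∧ S ⊆ board m \ X)}

lemma T_succ (k : ℕ) : T (k + 1) = T k + (k + 1) := by
  have h1 : 2 ∣ k * (k + 1) := (Nat.even_mul_succ_self k).two_dvd
  have h2 : 2 ∣ (k + 1) * (k + 2) := (Nat.even_mul_succ_self (k + 1)).two_dvd
  have e1 : 2 * T k = k * (k + 1) := Nat.mul_div_cancel' h1
  have e2 : 2 * T (k + 1) = (k + 1) * (k + 2) := by
    have := Nat.mul_div_cancel' h2
    simpa [T] using this
  have e3 : (k + 1) * (k + 2) = k * (k + 1) + 2 * (k + 1) := by ring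
  omega

lemma T_mono : Monotone T :=
  monotone_nat_of_le_succ fun n => by rw [T_succ]; omega

lemma row_card (r : ℕ) (hr : 1 ≤ r) :
    (Finset.Ioc (T (r - 1)) (T r)).card = r := by
  obtain ⟨k, rfl⟩ : ∃ k, r = k + 1 := ⟨r - 1, by omega⟩
  have h : k + 1 - 1 = k := rfl
  rw [Nat.card_Ioc, h, T_succ]
  omega

lemma row_subset_board {r m : ℕ} (hr : r ≤ m) :
    Finset.Ioc (T (r - 1)) (T r) ⊆ board m := by
  intro x hx
  simp only [Finset.mem_Ioc] at hx
  simp only [board, Finset.mem_Icc]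
  exact ⟨by omega, hx.2.trans (T_mono hr)⟩

/-- Greedy two-sided chain lemma. -/
lemma greedy (a b : ℕ → ℕ) : ∀ N p q, p + q = N + 1 →
    (∀ r, 1 ≤ r → r ≤ N → r ≤ a r + b r) →
    (∃ f : ℕ → ℕ, (∀ i j, i < j → j < p → f i < f j) ∧
      (∀ j, j < p → 1 ≤ f j ∧ f j ≤ N ∧ j + 1 ≤ a (f j))) ∨
    (∃ f : ℕ → ℕ, (∀ i j, i < j → j < q → f i < f j) ∧
      (∀ j, j < q → 1 ≤ f j ∧ f j ≤ N ∧ j + 1 ≤ b (f j))) := by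
  intro N
  induction N with
  | zero =>
    intro p q hpq _
    rcases Nat.eq_zero_or_pos p with hp | hp
    · exact Or.inl ⟨id, by omega, by omega⟩
    · have : q = 0 := by omega
      exact Or.inr ⟨id, by omega, by omega⟩
  | succ N ih =>
    intro p q hpq hab
    rcases Nat.eq_zero_or_pos p with hp | hp
    · exact Or.inl ⟨id, by omega, by omega⟩
    rcases Nat.eq_zero_or_pos q with hq | hq
    · exact Or.inr ⟨id, by omega, by omega⟩
    have htop : N + 1 ≤ a (N + 1) + b (N + 1) := hab (N + 1) (by omega) le_rfl
    have hab' : ∀ r, 1 ≤ r → r ≤ N → r ≤ a r + b r := fun r h1 h2 => hab r h1 (by omega)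
    rcases Nat.lt_or_ge (a (N + 1)) p with ha | ha
    · -- b (N+1) ≥ q ; recurse with p, q-1
      have hbN : q ≤ b (N + 1) := by omega
      rcases ih p (q - 1) (by omega) hab' with ⟨f, hf1, hf2⟩ | ⟨f, hf1, hf2⟩
      · exact Or.inl ⟨f, hf1, fun j hj => by
          obtain ⟨u, v, w⟩ := hf2 j hj; exact ⟨u, by omega, w⟩⟩
      · refine Or.inr ⟨fun j => if j = q - 1 then N + 1 else f j, ?_, ?_⟩
        · intro i j hij hj
          beta_reduce
          have hine : i ≠ q - 1 := by omega
          rw [if_neg hine]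
          by_cases hje : j = q - 1
          · have hi : i < q - 1 := by omega
            have := (hf2 i hi).2.1
            rw [if_pos hje]
            omega
          · have hj' : j < q - 1 := by omega
            rw [if_neg hje]
            exact hf1 i j hij hj'
        · intro j hj
          beta_reduce
          by_cases hje : j = q - 1
          · rw [if_pos hje]
            exact ⟨by omega, le_rfl, by omega⟩
          · have hj' : j < q - 1 := by omega
            rw [if_neg hje]
            obtain ⟨u, v, w⟩ := hf2 j hj'
            exact ⟨u, by omega, w⟩
    · -- a (N+1) ≥ p ; recurse with p-1, q
      rcases ih (p - 1) q (by omega) hab' with ⟨f, hf1, hf2⟩ | ⟨f, hf1, hf2⟩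
      · refine Or.inl ⟨fun j => if j = p - 1 then N + 1 else f j, ?_, ?_⟩
        · intro i j hij hj
          beta_reduce
          have hine : i ≠ p - 1 := by omega
          rw [if_neg hine]
          by_cases hje : j = p - 1
          · have hi : i < p - 1 := by omega
            have := (hf2 i hi).2.1
            rw [if_pos hje]
            omega
          · have hj' : j < p - 1 := by omega
            rw [if_neg hje]
            exact hf1 i j hij hj'
        · intro j hj
          beta_reduce
          by_cases hje : j = p - 1
          · rw [if_pos hje]
            exact ⟨by omega, le_rfl, by omega⟩
          · have hj' : j < p - 1 := by omega
            rw [if_neg hje]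
            obtain ⟨u, v, w⟩ := hf2 j hj'
            exact ⟨u, by omega, w⟩
      · exact Or.inr ⟨f, hf1, fun j hj => by
          obtain ⟨u, v, w⟩ := hf2 j hj; exact ⟨u, by omega, w⟩⟩

/-- From a chain of rows with enough `Y`-cells, build a triangle inside `Y`. -/
lemma exists_triangle (m n : ℕ) (Y : Finset ℕ) (f : ℕ → ℕ)
    (hmono : ∀ i j, i < j → j < n → f i < f j)
    (hb : ∀ j, j < n → 1 ≤ f j ∧ f j ≤ m ∧
      j + 1 ≤ (Y ∩ Finset.Ioc (T (f j - 1)) (T (f j))).card) :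
    ∃ S, IsTriangleOn m n S ∧ S ⊆ Y := by
  have hL : ∀ j : Fin n, ∃ t ⊆ Y ∩ Finset.Ioc (T (f (j : ℕ) - 1)) (T (f (j : ℕ))),
      t.card = (j : ℕ) + 1 := fun j => Finset.exists_subset_card_eq (hb j j.isLt).2.2
  choose L hLsub hLcard using hL
  refine ⟨Finset.univ.biUnion L, ⟨fun j => f (j : ℕ), ?_, ?_, ?_, L, hLcard, ?_, rfl⟩, ?_⟩
  · intro i j hij
    exact hmono i j (Fin.lt_def.mp hij) j.isLt
  · exact fun j => (hb j j.isLt).1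
  · exact fun j => (hb j j.isLt).2.1
  · exact fun j => (hLsub j).trans Finset.inter_subset_right
  · intro x hx
    obtain ⟨j, _, hj⟩ := Finset.mem_biUnion.mp hx
    exact Finset.inter_subset_left (hLsub j hj)

/-- Lower bound on strictly monotone sequences of rows. -/
lemma sm_lb {n : ℕ} (f : Fin n → ℕ) (hf : StrictMono f) (hn : 0 < n) :
    ∀ k (hk : k < n), f ⟨0, hn⟩ + k ≤ f ⟨k, hk⟩ := by
  intro k
  induction k with
  | zero => intro hk; simp
  | succ k ihk =>
    intro hk
    have h1 := ihk (by omega)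
    have h2 : f ⟨k, by omega⟩ < f ⟨k + 1, hk⟩ := hf (Fin.mk_lt_mk.mpr (Nat.lt_succ_self k))
    omega

lemma R1_general (p q : ℕ) (hp : 1 ≤ p) (hq : 1 ≤ q) : R1 p q = p + q - 1 := by
  have hmem : (p + q - 1) ∈ {m | max p q ≤ m ∧ ∀ X : Finset ℕ, X ⊆ board m →
      (∃ S, IsTriangleOn m p S ∧ S ⊆ X) ∨
      (∃ S, IsTriangleOn m q S ∧ S ⊆ board m \ X)} := by
    constructor
    · exact max_le (by omega) (by omega)
    · intro X hX
      set m := p + q - 1 with hm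
      set a : ℕ → ℕ := fun r => (X ∩ Finset.Ioc (T (r - 1)) (T r)).card with ha
      set b : ℕ → ℕ := fun r => ((board m \ X) ∩ Finset.Ioc (T (r - 1)) (T r)).card with hb
      have hab : ∀ r, 1 ≤ r → r ≤ m → r ≤ a r + b r := by
        intro r h1 h2
        have hsub : Finset.Ioc (T (r - 1)) (T r) ⊆
            (X ∩ Finset.Ioc (T (r - 1)) (T r)) ∪
            ((board m \ X) ∩ Finset.Ioc (T (r - 1)) (T r)) := by
          intro x hx
          have hxb : x ∈ board m := row_subset_board h2 hx
          by_cases hxX : x ∈ X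
          · exact Finset.mem_union_left _ (Finset.mem_inter.mpr ⟨hxX, hx⟩)
          · exact Finset.mem_union_right _
              (Finset.mem_inter.mpr ⟨Finset.mem_sdiff.mpr ⟨hxb, hxX⟩, hx⟩)
        calc r = (Finset.Ioc (T (r - 1)) (T r)).card := (row_card r h1).symm
          _ ≤ _ := Finset.card_le_card hsub
          _ ≤ a r + b r := Finset.card_union_le _ _
      rcases greedy a b m p q (by omega) hab with ⟨f, hf1, hf2⟩ | ⟨f, hf1, hf2⟩
      · exact Or.inl (exists_triangle m p X f hf1 hf2)
      · exact Or.inr (exists_triangle m q (board m \ X) f hf1 hf2)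
  have hlb : ∀ m ∈ {m | max p q ≤ m ∧ ∀ X : Finset ℕ, X ⊆ board m →
      (∃ S, IsTriangleOn m p S ∧ S ⊆ X) ∨
      (∃ S, IsTriangleOn m q S ∧ S ⊆ board m \ X)}, p + q - 1 ≤ m := by
    rintro m ⟨hmax, hprop⟩
    by_contra hcon
    push_neg at hcon
    have hpm : p ≤ m := le_trans (le_max_left _ _) hmax
    have hqm : q ≤ m := le_trans (le_max_right _ _) hmax
    have hXsub : Finset.Icc 1 (T (p - 1)) ⊆ board m := by
      intro x hx
      simp only [Finset.mem_Icc] at hx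
      exact Finset.mem_Icc.mpr ⟨hx.1, hx.2.trans (T_mono (by omega))⟩
    rcases hprop (Finset.Icc 1 (T (p - 1))) hXsub with
      ⟨S, ⟨rows, hsm, h1, hm2, L, hcard, hLsub, hSeq⟩, hSX⟩ |
      ⟨S, ⟨rows, hsm, h1, hm2, L, hcard, hLsub, hSeq⟩, hSX⟩
    · -- triangle of p levels inside the top p-1 rows: impossible
      have hplast : p - 1 < p := by omega
      have hge : p ≤ rows ⟨p - 1, hplast⟩ := by
        have := sm_lb rows hsm (by omega) (p - 1) hplast
        have h0 := h1 ⟨0, by omega⟩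
        omega
      have hLne : (L ⟨p - 1, hplast⟩).Nonempty := by
        rw [← Finset.card_pos, hcard]; omega
      obtain ⟨x, hx⟩ := hLne
      have hx1 := hLsub _ hx
      simp only [Finset.mem_Ioc] at hx1
      have hxS : x ∈ S := by
        rw [hSeq]; exact Finset.mem_biUnion.mpr ⟨_, Finset.mem_univ _, hx⟩
      have hxX := hSX hxS
      simp only [Finset.mem_Icc] at hxX
      have : T (p - 1) ≤ T (rows ⟨p - 1, hplast⟩ - 1) := T_mono (by omega)
      omega
    · -- triangle of q levels inside the bottom rows: impossible
      have h0q : 0 < q := hq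
      have hLne : (L ⟨0, h0q⟩).Nonempty := by
        rw [← Finset.card_pos, hcard]; omega
      obtain ⟨x, hx⟩ := hLne
      have hx1 := hLsub _ hx
      simp only [Finset.mem_Ioc] at hx1
      have hxS : x ∈ S := by
        rw [hSeq]; exact Finset.mem_biUnion.mpr ⟨_, Finset.mem_univ _, hx⟩
      have hxX := hSX hxS
      rw [Finset.mem_sdiff] at hxX
      have hxb := hxX.1
      simp only [board, Finset.mem_Icc] at hxb
      have hxnX : ¬ (1 ≤ x ∧ x ≤ T (p - 1)) := by
        intro h; exact hxX.2 (Finset.mem_Icc.mpr h)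
      have hxgt : T (p - 1) < x := by omega
      -- rows 0 ≥ p
      have hr0 : p ≤ rows ⟨0, h0q⟩ := by
        by_contra hcon2
        push_neg at hcon2
        have : T (rows ⟨0, h0q⟩) ≤ T (p - 1) := T_mono (by omega)
        omega
      have hqlast : q - 1 < q := by omega
      have hge := sm_lb rows hsm h0q (q - 1) hqlast
      have hle := hm2 ⟨q - 1, hqlast⟩
      omega
  exact le_antisymm (Nat.sInf_le hmem) (le_csInf ⟨_, hmem⟩ hlb)

/-- For all `p, q ≥ 1`, `R₁(p, q, 1) = p + q - 1`; in particular, for all `n ≥ 1`,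
`R₁(n, n, 1) = 2n - 1`. -/
theorem R1_eq (p q : ℕ) (hp : 1 ≤ p) (hq : 1 ≤ q) :
    R1 p q = p + q - 1 ∧ ∀ n : ℕ, 1 ≤ n → R1 n n = 2 * n - 1 := by
  refine ⟨R1_general p q hp hq, fun n hn => ?_⟩
  rw [R1_general n n hn hn]
  omega
end
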